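/- arXiv:1209.3955 — 3 statements merged into one kernel-verified Lean document; each statement's English description precedes it below -/
import Mathlib

section
/- (Euler's formula) For every even integer n > 2, −((n+1)·B_n)/n! = Σ_{k=2}^{n−2} (B_k/k!)·(B_{n−k}/(n−k)!). -/
/-!
Differentiating `B · (eˣ - 1) = x` for the generating function `B = x / (eˣ - 1)` yields the
Riccati equation `B² = (1 - x) B - x B'`. Its coefficient of `xⁿ` is Euler's formula: in the
convolution sum the terms `k = 0, n` give `2 Bₙ / n!`, and the terms `k = 1, n - 1` vanish
because `Bₙ₋₁ = 0` for odd `n - 1 > 1`.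
-/

open Finset PowerSeries Nat

open scoped PowerSeries.derivative

theorem bernoulliPowerSeries_sq (A : Type*) [CommRing A] [Algebra ℚ A] :
    bernoulliPowerSeries A ^ 2 =
      (1 - X) * bernoulliPowerSeries A - X * d⁄dX A (bernoulliPowerSeries A) := by
  set B := bernoulliPowerSeries A
  have hB : B * (exp A - 1) = X := bernoulliPowerSeries_mul_exp_sub_one A
  have hD : B * exp A + (exp A - 1) * d⁄dX A B = 1 := by
    have h := congrArg (d⁄dX A) hB
    rw [Derivation.leibniz, map_sub, derivative_exp, derivative_X, Derivation.map_one_eq_zero,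
      sub_zero, smul_eq_mul, smul_eq_mul] at h
    exact h
  linear_combination B * hD - (B + d⁄dX A B) * hB

theorem sum_range_bernoulli_div_factorial_mul (n : ℕ) :
    ∑ k ∈ range (n + 2), bernoulli k / k ! * (bernoulli (n + 1 - k) / (n + 1 - k)!) =
      -(n * (bernoulli (n + 1) / (n + 1)!)) - bernoulli n / n ! := by
  have h := congrArg (coeff (n + 1)) (bernoulliPowerSeries_sq ℚ)
  rw [sq, coeff_mul, Nat.sum_antidiagonal_eq_sum_range_succ (fun i j => coeff i _ * coeff j _),
    map_sub, sub_mul, one_mul, map_sub, coeff_succ_X_mul, coeff_succ_X_mul, coeff_derivative] at h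
  simp only [bernoulliPowerSeries, coeff_mk, Algebra.algebraMap_self, RingHom.id_apply] at h
  rw [h]
  ring

theorem sum_range_succ_eq_sum_Icc_add_ends {M : Type*} [AddCommMonoid M] (f : ℕ → M) {n : ℕ}
    (hn : 3 ≤ n) :
    ∑ k ∈ range (n + 1), f k = f 0 + f 1 + ∑ k ∈ Icc 2 (n - 2), f k + f (n - 1) + f n := by
  obtain ⟨m, rfl⟩ : ∃ m, n = m + 3 := ⟨n - 3, by omega⟩
  rw [sum_range_succ, sum_range_succ, range_eq_Ico, sum_eq_sum_Ico_succ_bot (by omega),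
    sum_eq_sum_Ico_succ_bot (by omega), ← Ico_add_one_right_eq_Icc]
  simp only [add_assoc]
  rfl

/-- Euler's formula on Bernoulli numbers (convention B₁ = -1/2): for even `n > 2`,
`-((n+1)·Bₙ)/n! = ∑_{k=2}^{n-2} (B_k/k!)·(B_{n-k}/(n-k)!)`. -/
theorem euler_formula (n : ℕ) (hn : 2 < n) (hne : Even n) :
    -(((n : ℚ) + 1) * bernoulli n) / n.factorial =
      ∑ k ∈ Finset.Icc 2 (n - 2),
        (bernoulli k / k.factorial) * (bernoulli (n - k) / (n - k).factorial) := by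
  obtain ⟨m, rfl⟩ : ∃ m, n = m + 1 := ⟨n - 1, by omega⟩
  have hm : bernoulli m = 0 :=
    bernoulli_eq_zero_of_odd (Nat.not_even_iff_odd.mp (Nat.even_add_one.mp hne)) (by omega)
  have h := sum_range_bernoulli_div_factorial_mul m
  rw [sum_range_succ_eq_sum_Icc_add_ends _ (by omega : 3 ≤ m + 1)] at h
  simp only [Nat.add_sub_cancel, Nat.sub_self, Nat.sub_zero, show m + 1 - m = 1 by omega,
    hm, bernoulli_zero, factorial_zero] at h
  rw [Nat.cast_add_one]
  linear_combination -h
end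

section
/- Define, for natural numbers p, q, the rational number c(p,q) = (−1)^q · (B_{p+q}/(p+q)!) · binom(p+q, q). Then for all natural numbers p, q: c(p,q) + Σ_{i=0}^{p} c(p+1−i, q)·c(i,0) − Σ_{j=0}^{q} c(p, q+1−j)·c(0,j) = 0. -/
/-!
Put `y = s x`. Then `∑ c(p,q) x^p y^q = B(x - y) = B((1 - s) x)` with `B(t) = t / (e^t - 1)`, so
`c(p,q)` is the coefficient of `s^q x^(p+q)` in the rescaled series `B((1 - s) x) ∈ ℚ[s]⟦x⟧`, and
`c(i,0)`, `c(0,j)` are read off `B(x)` and `B(-s x)` in the same way. For `β(t) = 1 / (e^t - 1)` one has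
`β(x) β(w) = β(x + w) (β(x) + β(w) + 1)`; cleared of denominators this relates `B(u x)`, `B(v x)` and
`B((u + v) x)`, and at `u = 1`, `v = -s` its coefficient of `s^(q+1) x^(p+q+1)` is the claimed identity.
-/

open Finset

/-- `c(p,q) = (-1)^q · (B_{p+q}/(p+q)!) · C(p+q, q)` with the convention B₁ = -1/2. -/
def lsCoeff (p q : ℕ) : ℚ :=
  (-1) ^ q * (bernoulli (p + q) / (p + q).factorial) * ((p + q).choose q)

open PowerSeries

open Polynomial in
theorem Polynomial.coeff_one_sub_X_pow {R : Type*} [CommRing R] (n k : ℕ) :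
    ((1 - X : R[X]) ^ n).coeff k = (-1) ^ k * n.choose k := by
  have h : (1 - X : R[X]) = C (-1) * X + 1 := by rw [map_neg, map_one]; ring
  have hm (m : ℕ) : (C (-1) * X : R[X]) ^ m * 1 ^ (n - m) * (n.choose m : R[X])
      = C ((-1) ^ m * (n.choose m : R)) * X ^ m := by
    rw [map_mul, map_pow, map_natCast]; ring
  simp only [h, add_pow, finsetSum_coeff, hm, coeff_C_mul_X_pow, Finset.sum_ite_eq, mem_range]
  split_ifs with hk
  · rfl
  · rw [Nat.choose_eq_zero_of_lt (by omega), Nat.cast_zero, mul_zero]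

theorem add_mul_mul_eq_mul_of_mul_sub_one {R : Type*} [CommRing R] [IsDomain R]
    {x w a b G H F : R} (ha : a ≠ 1) (hb : b ≠ 1) (hab : a * b ≠ 1)
    (hG : G * (a - 1) = x) (hH : H * (b - 1) = w) (hF : F * (a * b - 1) = x + w) :
    (x + w) * G * H = F * (x * H + w * G + x * w) := by
  have hP : (a - 1) * (b - 1) * (a * b - 1) ≠ 0 := by
    simp only [ne_eq, mul_eq_zero, sub_eq_zero, not_or]
    exact ⟨⟨ha, hb⟩, hab⟩
  refine mul_right_cancel₀ hP ?_
  linear_combination ((x + w) * (a * b - 1) * H * (b - 1) - (x + w) * w * (b - 1)) * hG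
    + ((x + w) * (a * b - 1) * x - (x + w) * x * (a - 1)) * hH
    - (x * H * (b - 1) * (a - 1) + w * G * (a - 1) * (b - 1) + x * w * (a - 1) * (b - 1)) * hF

section Rescale

variable {A : Type*} [CommRing A] [Algebra ℚ A]

theorem rescale_bernoulliPowerSeries_mul_exp_sub_one (a : A) :
    rescale a (bernoulliPowerSeries A) * (rescale a (exp A) - 1) = C a * X := by
  simpa [map_mul, map_sub, map_one, rescale_X] using
    congrArg (rescale a) (bernoulliPowerSeries_mul_exp_sub_one A)

theorem rescale_exp_ne_one {a : A} (ha : a ≠ 0) : rescale a (exp A) ≠ 1 := by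
  intro h
  simpa [coeff_one, ha] using congrArg (coeff 1) h

theorem bernoulliPowerSeries_rescale_add [IsDomain A] {u v : A} (hu : u ≠ 0) (hv : v ≠ 0)
    (huv : u + v ≠ 0) :
    C (u + v) * (rescale u (bernoulliPowerSeries A) * rescale v (bernoulliPowerSeries A)) =
      rescale (u + v) (bernoulliPowerSeries A) * (C u * rescale v (bernoulliPowerSeries A)
        + C v * rescale u (bernoulliPowerSeries A) + C (u * v) * X) := by
  have key := add_mul_mul_eq_mul_of_mul_sub_one (rescale_exp_ne_one hu) (rescale_exp_ne_one hv)
    (by rw [exp_mul_exp_eq_exp_add]; exact rescale_exp_ne_one huv)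
    (rescale_bernoulliPowerSeries_mul_exp_sub_one u)
    (rescale_bernoulliPowerSeries_mul_exp_sub_one v)
    (by rw [exp_mul_exp_eq_exp_add, rescale_bernoulliPowerSeries_mul_exp_sub_one, map_add, add_mul])
  refine mul_left_cancel₀ (X_ne_zero (R := A)) ?_
  simp only [map_add, map_mul]
  linear_combination key

end Rescale

section Homogenized

-- Power series in `x` over `ℚ[s]`, where `s` is `Polynomial.X`.
local notation "𝔹" => bernoulliPowerSeries (Polynomial ℚ)

theorem coeff_bernoulliPowerSeries_eq_C_lsCoeff (m : ℕ) :
    coeff m 𝔹 = Polynomial.C (lsCoeff m 0) := by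
  simp [bernoulliPowerSeries, lsCoeff]

theorem coeff_rescale_neg_X_bernoulliPowerSeries (l : ℕ) :
    coeff l (rescale (-Polynomial.X) 𝔹) = Polynomial.C (lsCoeff 0 l) * Polynomial.X ^ l := by
  rw [coeff_rescale, bernoulliPowerSeries, coeff_mk, neg_pow, lsCoeff, Polynomial.algebraMap_eq]
  simp only [zero_add, Nat.choose_self, Nat.cast_one, mul_one, map_mul, map_pow, map_neg, map_one]
  ring

theorem coeff_coeff_rescale_one_sub_X_bernoulliPowerSeries (m j : ℕ) :
    (coeff m (rescale (1 - Polynomial.X) 𝔹)).coeff j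
      = (-1) ^ j * (bernoulli m / m.factorial) * m.choose j := by
  rw [coeff_rescale, bernoulliPowerSeries, coeff_mk, Polynomial.algebraMap_eq,
    Polynomial.coeff_mul_C, Polynomial.coeff_one_sub_X_pow]
  ring

theorem coeff_coeff_rescale_one_sub_X_bernoulliPowerSeries_add (p q : ℕ) :
    (coeff (p + q) (rescale (1 - Polynomial.X) 𝔹)).coeff q = lsCoeff p q :=
  coeff_coeff_rescale_one_sub_X_bernoulliPowerSeries (p + q) q

theorem coeff_coeff_rescale_neg_X_mul_bernoulliPowerSeries (N j : ℕ) :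
    (coeff N (rescale (-Polynomial.X) 𝔹 * 𝔹)).coeff j
      = if j ≤ N then lsCoeff 0 j * lsCoeff (N - j) 0 else 0 := by
  simp only [coeff_mul, Nat.sum_antidiagonal_eq_sum_range_succ_mk, Polynomial.finsetSum_coeff,
    coeff_rescale_neg_X_bernoulliPowerSeries, coeff_bernoulliPowerSeries_eq_C_lsCoeff,
    mul_right_comm _ (Polynomial.X ^ _), ← map_mul, Polynomial.coeff_C_mul_X_pow, sum_ite_eq,
    mem_range, Nat.lt_succ_iff]

theorem coeff_coeff_bernoulliPowerSeries_mul_rescale_one_sub_X (p q : ℕ) :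
    (coeff (p + q + 1) (𝔹 * rescale (1 - Polynomial.X) 𝔹)).coeff q
      = ∑ i ∈ range (p + 2), lsCoeff (p + 1 - i) q * lsCoeff i 0 := by
  simp only [coeff_mul, Nat.sum_antidiagonal_eq_sum_range_succ_mk, Polynomial.finsetSum_coeff,
    coeff_bernoulliPowerSeries_eq_C_lsCoeff, Polynomial.coeff_C_mul]
  rw [← sum_subset (s₁ := range (p + 2)) (range_subset_range.2 (by omega))]
  · refine sum_congr rfl fun i hi => ?_
    rw [mem_range] at hi
    rw [show p + q + 1 - i = p + 1 - i + q by omega,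
      coeff_coeff_rescale_one_sub_X_bernoulliPowerSeries_add, mul_comm]
  · intro i hi hi'
    rw [mem_range] at hi hi'
    rw [coeff_coeff_rescale_one_sub_X_bernoulliPowerSeries, Nat.choose_eq_zero_of_lt (by omega),
      Nat.cast_zero, mul_zero, mul_zero]

theorem coeff_coeff_rescale_neg_X_mul_rescale_one_sub_X (p q : ℕ) :
    (coeff (p + q + 1) (rescale (-Polynomial.X) 𝔹 * rescale (1 - Polynomial.X) 𝔹)).coeff (q + 1)
      = ∑ j ∈ range (q + 2), lsCoeff p (q + 1 - j) * lsCoeff 0 j := by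
  simp only [coeff_mul, Nat.sum_antidiagonal_eq_sum_range_succ_mk, Polynomial.finsetSum_coeff,
    coeff_rescale_neg_X_bernoulliPowerSeries, mul_assoc, Polynomial.coeff_C_mul,
    Polynomial.coeff_X_pow_mul']
  rw [← sum_subset (s₁ := range (q + 2)) (range_subset_range.2 (by omega))]
  · refine sum_congr rfl fun j hj => ?_
    rw [mem_range] at hj
    rw [if_pos (by omega), show p + q + 1 - j = p + (q + 1 - j) by omega,
      coeff_coeff_rescale_one_sub_X_bernoulliPowerSeries_add, mul_comm]
  · intro j _ hj
    rw [mem_range] at hj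
    rw [if_neg (by omega), mul_zero]

theorem bernoulliPowerSeries_rescale_add_one_neg_X :
    C (1 - Polynomial.X) * (rescale (-Polynomial.X) 𝔹 * 𝔹)
      = rescale (-Polynomial.X) 𝔹 * rescale (1 - Polynomial.X) 𝔹
        - C Polynomial.X * (𝔹 * rescale (1 - Polynomial.X) 𝔹)
        - C Polynomial.X * (X * rescale (1 - Polynomial.X) 𝔹) := by
  have h := bernoulliPowerSeries_rescale_add (A := Polynomial ℚ) (u := 1) (v := -Polynomial.X)
    one_ne_zero (neg_ne_zero.2 Polynomial.X_ne_zero)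
    (by rw [← sub_eq_add_neg]; exact sub_ne_zero.2 (Polynomial.X_ne_C (1 : ℚ)).symm)
  simp only [rescale_one, RingHom.id_apply, ← sub_eq_add_neg, map_one, one_mul, map_neg,
    neg_mul] at h
  linear_combination h

end Homogenized

/-- For all natural numbers `p, q`:
`c(p,q) + ∑_{i=0}^{p} c(p+1-i,q)·c(i,0) − ∑_{j=0}^{q} c(p,q+1-j)·c(0,j) = 0`. -/
theorem lsCoeff_identity (p q : ℕ) :
    lsCoeff p q + (∑ i ∈ Finset.range (p + 1), lsCoeff (p + 1 - i) q * lsCoeff i 0)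
      - ∑ j ∈ Finset.range (q + 1), lsCoeff p (q + 1 - j) * lsCoeff 0 j = 0 := by
  have h := congrArg (fun Φ ↦ (coeff (p + q + 1) Φ).coeff (q + 1))
    bernoulliPowerSeries_rescale_add_one_neg_X
  simp only [map_sub, coeff_C_mul, sub_mul, one_mul, Polynomial.coeff_sub, Polynomial.coeff_X_mul,
    coeff_succ_X_mul, coeff_coeff_rescale_neg_X_mul_bernoulliPowerSeries,
    coeff_coeff_bernoulliPowerSeries_mul_rescale_one_sub_X,
    coeff_coeff_rescale_neg_X_mul_rescale_one_sub_X,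
    coeff_coeff_rescale_one_sub_X_bernoulliPowerSeries_add] at h
  rw [if_pos (by omega), if_pos (by omega), show p + q + 1 - (q + 1) = p by omega,
    show p + q + 1 - q = p + 1 by omega, sum_range_succ _ (q + 1), sum_range_succ _ (p + 1),
    Nat.sub_self, Nat.sub_self] at h
  linear_combination h
end

section
/- Let L be a Lie algebra over ℚ, let w, u, v, d ∈ L, and suppose N ≥ 1 is such that (ad_w)^N = 0. If d = ⁅w, v⁆ + Σ_{i=0}^{N−1} (B_i/i!)·(ad_w)^i(v − u), then u = Σ_{i=0}^{N−1} (1/i!)·(ad_w)^i(v) − Σ_{i=0}^{N−1} (1/(i+1)!)·(ad_w)^i(d). (That is, d = ad_w(v) + (ad_w/(e^{ad_w}−id))(v−u) implies u = e^{ad_w}(v) − ((e^{ad_w}−id)/ad_w)(d), so u is the gauge transform of v by w when d = ∂w.) -/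
open Finset

private lemma ls_scalar_key (n : ℕ) :
    ∑ k ∈ range (n + 1),
        (1 : ℚ) / (k + 1).factorial * (_root_.bernoulli (n - k) / (n - k).factorial)
      = if n = 0 then 1 else 0 := by
  rw [← Finset.sum_range_reflect]
  have key : ∀ j ∈ range (n + 1),
      (1 : ℚ) / (n + 1 - 1 - j + 1).factorial *
          (_root_.bernoulli (n - (n + 1 - 1 - j)) / (n - (n + 1 - 1 - j)).factorial)
        = ((n + 1).choose j : ℚ) * _root_.bernoulli j / (n + 1).factorial := by
    intro j hj
    rw [mem_range, Nat.lt_succ_iff] at hj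
    have h1 : n + 1 - 1 - j = n - j := by omega
    have h2 : n - (n - j) = j := by omega
    rw [h1, h2, Nat.cast_choose ℚ (hj.trans (Nat.le_succ n)), Nat.succ_sub hj]
    have hf1 : ((n - j + 1).factorial : ℚ) ≠ 0 := Nat.cast_ne_zero.2 (Nat.factorial_ne_zero _)
    have hf2 : ((j).factorial : ℚ) ≠ 0 := Nat.cast_ne_zero.2 (Nat.factorial_ne_zero _)
    have hf3 : (((n + 1)).factorial : ℚ) ≠ 0 := Nat.cast_ne_zero.2 (Nat.factorial_ne_zero _)
    field_simp
  rw [Finset.sum_congr rfl key, ← Finset.sum_div, _root_.sum_bernoulli]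
  rcases Nat.eq_zero_or_pos n with h | h
  · subst h; norm_num
  · rw [if_neg (by omega : ¬ n + 1 = 1), if_neg (by omega : ¬ n = 0), zero_div]

/-- Gauge transformation from the Lawrence–Sullivan differential formula: if
`(ad_w)^N = 0` with `N ≥ 1` and `d = ⁅w,v⁆ + ∑_{i=0}^{N-1} (Bᵢ/i!)·(ad_w)^i(v-u)`, then
`u = ∑_{i=0}^{N-1} (1/i!)·(ad_w)^i(v) - ∑_{i=0}^{N-1} (1/(i+1)!)·(ad_w)^i(d)`
(with the Bernoulli convention B₁ = -1/2). -/
theorem gauge_from_LS_differential (L : Type*) [LieRing L] [LieAlgebra ℚ L]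
    (w u v d : L) (N : ℕ) (hN : 1 ≤ N) (hnil : (LieAlgebra.ad ℚ L w) ^ N = 0)
    (hd : d = ⁅w, v⁆ + ∑ i ∈ Finset.range N,
      (bernoulli i / i.factorial) • ((LieAlgebra.ad ℚ L w) ^ i) (v - u)) :
    u = (∑ i ∈ Finset.range N, ((1 : ℚ) / i.factorial) • ((LieAlgebra.ad ℚ L w) ^ i) v)
      - ∑ i ∈ Finset.range N, ((1 : ℚ) / (i + 1).factorial) • ((LieAlgebra.ad ℚ L w) ^ i) d := by
  set A : Module.End ℚ L := LieAlgebra.ad ℚ L w with hA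
  set G : Module.End ℚ L := ∑ i ∈ range N, ((1 : ℚ) / (i + 1).factorial) • A ^ i with hG
  set F : Module.End ℚ L := ∑ j ∈ range N, (_root_.bernoulli j / j.factorial) • A ^ j with hF
  set E : Module.End ℚ L := ∑ i ∈ range N, ((1 : ℚ) / i.factorial) • A ^ i with hE
  -- polynomial versions
  set P : Polynomial ℚ :=
    ∑ i ∈ range N, ((1 : ℚ) / (i + 1).factorial) • Polynomial.X ^ i with hP
  set Q : Polynomial ℚ :=
    ∑ j ∈ range N, (_root_.bernoulli j / j.factorial) • Polynomial.X ^ j with hQ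
  have coeffP : ∀ k, k < N → P.coeff k = 1 / (k + 1).factorial := by
    intro k hk
    simp only [hP, Polynomial.finset_sum_coeff, Polynomial.coeff_smul,
      Polynomial.coeff_X_pow, smul_eq_mul, mul_ite, mul_one, mul_zero]
    rw [Finset.sum_ite_eq (range N)]
    simp [hk]
  have coeffQ : ∀ k, k < N → Q.coeff k = _root_.bernoulli k / k.factorial := by
    intro k hk
    simp only [hQ, Polynomial.finset_sum_coeff, Polynomial.coeff_smul,
      Polynomial.coeff_X_pow, smul_eq_mul, mul_ite, mul_one, mul_zero]
    rw [Finset.sum_ite_eq (range N)]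
    simp [hk]
  have hPQ : ∀ n, n < N → (P * Q).coeff n = if n = 0 then 1 else 0 := by
    intro n hn
    rw [Polynomial.coeff_mul, Finset.Nat.sum_antidiagonal_eq_sum_range_succ_mk]
    rw [← ls_scalar_key n]
    refine Finset.sum_congr rfl ?_
    intro k hk
    rw [mem_range, Nat.lt_succ_iff] at hk
    rw [coeffP k (by omega), coeffQ (n - k) (by omega)]
  have hdvd : (Polynomial.X : Polynomial ℚ) ^ N ∣ P * Q - 1 := by
    rw [Polynomial.X_pow_dvd_iff]
    intro m hm
    rw [Polynomial.coeff_sub, hPQ m hm, Polynomial.coeff_one]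
    simp
  obtain ⟨R, hR⟩ := hdvd
  have aevalsmul : ∀ (c : ℚ) (i : ℕ),
      Polynomial.aeval (R := ℚ) A (c • Polynomial.X ^ i) = c • A ^ i := by
    intro c i
    rw [Polynomial.smul_eq_C_mul, map_mul, Polynomial.aeval_C, map_pow,
      Polynomial.aeval_X, ← Algebra.smul_def]
  have hGF : G * F = 1 := by
    have hPa : Polynomial.aeval A P = G := by
      rw [hP, map_sum, hG]
      exact Finset.sum_congr rfl fun i _ => aevalsmul _ i
    have hQa : Polynomial.aeval A Q = F := by
      rw [hQ, map_sum, hF]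
      exact Finset.sum_congr rfl fun i _ => aevalsmul _ i
    have := congrArg (Polynomial.aeval A) hR
    rw [map_sub, map_mul, map_one, map_mul, map_pow, Polynomial.aeval_X, hnil, zero_mul,
      sub_eq_zero, hPa, hQa] at this
    exact this
  have hGA : G * A = E - 1 := by
    obtain ⟨M, rfl⟩ : ∃ M, N = M + 1 := ⟨N - 1, by omega⟩
    rw [hG, hE, Finset.sum_mul, Finset.sum_range_succ, Finset.sum_range_succ']
    simp only [smul_mul_assoc, ← pow_succ]
    rw [hnil, smul_zero, add_zero]
    simp only [Nat.factorial_zero, Nat.cast_one, pow_zero]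
    norm_num
  -- apply to elements
  have hEv : ∑ i ∈ range N, ((1 : ℚ) / i.factorial) • (A ^ i) v = E v := by
    rw [hE, LinearMap.sum_apply]
    exact Finset.sum_congr rfl fun i _ => (LinearMap.smul_apply _ _ _).symm
  have hGd : ∑ i ∈ range N, ((1 : ℚ) / (i + 1).factorial) • (A ^ i) d = G d := by
    rw [hG, LinearMap.sum_apply]
    exact Finset.sum_congr rfl fun i _ => (LinearMap.smul_apply _ _ _).symm
  have hFx : ∑ i ∈ range N, (_root_.bernoulli i / i.factorial) • (A ^ i) (v - u)
      = F (v - u) := by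
    rw [hF, LinearMap.sum_apply]
    exact Finset.sum_congr rfl fun i _ => (LinearMap.smul_apply _ _ _).symm
  rw [hEv, hGd]
  have hdv : d = A v + F (v - u) := by
    rw [hd, hFx]; rfl
  have : G d = E v - u := by
    rw [hdv, map_add, ← Module.End.mul_apply, ← Module.End.mul_apply (f := G) (g := F), hGA, hGF,
      Module.End.one_apply, LinearMap.sub_apply, Module.End.one_apply]
    abel
  rw [this]
  abel
end
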